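/- arXiv:1909.04439 — 3 statements merged into one kernel-verified Lean document; each statement's English description precedes it below -/
import Mathlib

section
/- Let x be a collision-free solution of the first-order singular Cucker–Smale system with β > 1 whose initial positions are strictly increasing: x_1(0) < x_2(0) < … < x_N(0). Define the critical coupling strength κ_c = max_{1 ≤ l ≤ N−1} ( −N(β−1)·Σ_{i=1}^l ν_i ) / ( l(N−l) ). If κ > κ_c, then mono-cluster flocking emerges: for every pair of indices i, j, the limit lim_{t→∞} |x_i(t) − x_j(t)| exists and is finite. -/
/-!
The system is the gradient flow `x' = -∇E` of the energy
`E(x) = -∑ᵢ νᵢ xᵢ + κ/(2N) ∑ᵢ ∑ₖ W(xₖ - xᵢ)` with `W' = Φ`. There are no collisions, so the order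
of the agents never changes, and on ordered configurations `∇E` is strongly monotone on bounded
sets because `Φ` is strictly increasing on each half-line. So if `x*` is an ordered critical
point of `E` with barycentre `0`, then `|x(t) - x*|²` is nonincreasing, the orbit stays bounded,
and `|x(t) - x*|²` then decays exponentially; in particular `|xᵢ - xⱼ| → |x*ᵢ - x*ⱼ|`.

The critical point minimises `E` over the configurations whose consecutive gaps all lie in
`[δ, R]`. The derivative of `E` in the `l`-th gap is the total gradient on the agents to its
right. At gap `δ` it is negative, as the singular repulsion of `Φ` near `0` dominates; at gap `R`
it is positive, since `κ > κ_c` says exactly that the attraction `≈ Φ^∞` across the gap beats the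
drift `-∑_{i ≤ l} νᵢ` separating the two blocks. Hence the minimiser is interior, these tail sums
of `∇E` vanish, and therefore so does `∇E`.
-/

open Real Filter Set Topology

/-- The potential function `Φ(x) = sign(x)·(β−1)⁻¹(1 − |x|^{1−β})` (with `Φ(0)=0`). -/
noncomputable def PhiCS (β y : ℝ) : ℝ := Real.sign y * (1 - |y| ^ (1 - β)) / (β - 1)

/-- A collision-free solution on `[0,∞)` of the first-order singular Cucker–Smale
system with short-range interaction:
`x_i'(t) = ν_i + (κ/N) Σ_{k≠i} Φ(x_k(t) − x_i(t))`, with `Σ_i x_i(0) = 0` and no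
collisions for all `t ≥ 0`. -/
def IsCFSol (N : ℕ) (β κ : ℝ) (ν : Fin N → ℝ) (x : ℝ → Fin N → ℝ) : Prop :=
  (∀ t ≥ (0:ℝ), ∀ i j : Fin N, i ≠ j → x t i ≠ x t j) ∧
  (∑ i, x 0 i = 0) ∧
  ∀ i, ∀ t ≥ (0:ℝ), HasDerivWithinAt (fun s => x s i)
    (ν i + (κ / (N:ℝ)) * ∑ k ∈ Finset.univ.erase i, PhiCS β (x t k - x t i)) (Set.Ici 0) t

/-- The critical coupling strength
`κ_c = max_{1 ≤ l ≤ N−1} (−N(β−1)·Σ_{i=1}^l ν_i)/(l(N−l))`. -/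
noncomputable def kappaC (N : ℕ) (β : ℝ) (ν : Fin N → ℝ) : ℝ :=
  ⨆ l : Fin (N - 1),
    (-((N:ℝ) * (β - 1) * ∑ i : Fin N, if (i:ℕ) < (l:ℕ) + 1 then ν i else 0)) /
      ((((l:ℕ):ℝ) + 1) * ((N:ℝ) - (((l:ℕ):ℝ) + 1)))


section OneSided

variable {f : ℝ → ℝ} {d x b : ℝ}

lemma HasDerivAt.nonneg_of_le_right (hf : HasDerivAt f d x) (hb : x < b)
    (h : ∀ s ∈ Ioo x b, f x ≤ f s) : 0 ≤ d := by
  refine ge_of_tendsto hf.tendsto_slope_zero_right ?_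
  filter_upwards [Ioo_mem_nhdsGT (sub_pos.2 hb)] with t ht
  have := h (x + t) ⟨by linarith [ht.1], by linarith [ht.2]⟩
  exact smul_nonneg (inv_nonneg.2 ht.1.le) (sub_nonneg.2 this)

lemma HasDerivAt.nonpos_of_le_left (hf : HasDerivAt f d x) (hb : b < x)
    (h : ∀ s ∈ Ioo b x, f x ≤ f s) : d ≤ 0 := by
  refine le_of_tendsto hf.tendsto_slope_zero_left ?_
  filter_upwards [Ioo_mem_nhdsLT (sub_neg.2 hb)] with t ht
  have := h (x + t) ⟨by linarith [ht.1], by linarith [ht.2]⟩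
  exact smul_nonpos_of_nonpos_of_nonneg (inv_nonpos.2 ht.2.le) (sub_nonneg.2 this)

end OneSided

section ODE

lemma antitoneOn_Ici_of_hasDerivWithinAt {f f' : ℝ → ℝ}
    (hf : ∀ t ≥ 0, HasDerivWithinAt f (f' t) (Ici 0) t) (hf' : ∀ t ≥ 0, f' t ≤ 0) :
    AntitoneOn f (Ici 0) := by
  refine antitoneOn_of_hasDerivWithinAt_nonpos (f' := f') (convex_Ici 0)
    (fun t ht => (hf t ht).continuousWithinAt) (fun t ht => ?_) (fun t ht => ?_)
  · rw [interior_Ici] at ht ⊢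
    exact (hf t ht.le).mono Ioi_subset_Ici_self
  · rw [interior_Ici] at ht
    exact hf' t ht.le

lemma le_mul_exp_neg_of_hasDerivWithinAt {f f' : ℝ → ℝ} {c : ℝ}
    (hf : ∀ t ≥ 0, HasDerivWithinAt f (f' t) (Ici 0) t) (hf' : ∀ t ≥ 0, f' t ≤ -c * f t)
    {t : ℝ} (ht : 0 ≤ t) : f t ≤ f 0 * exp (-c * t) := by
  have hexp : ∀ s, HasDerivAt (fun s => exp (c * s)) (exp (c * s) * c) s := fun s => by
    simpa using ((hasDerivAt_id s).const_mul c).exp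
  have hanti := antitoneOn_Ici_of_hasDerivWithinAt (f := fun s => f s * exp (c * s))
    (fun s hs => (hf s hs).mul (hexp s).hasDerivWithinAt) fun s hs => by
      nlinarith [hf' s hs, exp_pos (c * s)]
  have h := hanti self_mem_Ici ht ht
  simp only [mul_zero, exp_zero, mul_one] at h
  calc f t = f t * exp (c * t) * exp (-c * t) := by
        rw [mul_assoc, ← exp_add]
        simp
    _ ≤ f 0 * exp (-c * t) := by gcongr

end ODE

namespace CuckerSmale

open Finset

section Potential

variable {β : ℝ}

lemma phiCS_zero (β : ℝ) : PhiCS β 0 = 0 := by simp [PhiCS]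

lemma phiCS_neg (β y : ℝ) : PhiCS β (-y) = -PhiCS β y := by
  simp only [PhiCS, Real.sign_neg, abs_neg]
  ring

lemma phiCS_of_pos {y : ℝ} (hy : 0 < y) : PhiCS β y = (1 - y ^ (1 - β)) / (β - 1) := by
  rw [PhiCS, Real.sign_of_pos hy, abs_of_pos hy, one_mul]

lemma phiCS_lt (hβ : 1 < β) {y : ℝ} (hy : 0 < y) : PhiCS β y < (β - 1)⁻¹ := by
  rw [phiCS_of_pos hy, div_eq_mul_inv]
  have := Real.rpow_pos_of_pos hy (1 - β)
  have := inv_pos.2 (sub_pos.2 hβ)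
  nlinarith

lemma phiCS_le_phiCS (hβ : 1 < β) {p q : ℝ} (hp : 0 < p) (hpq : p ≤ q) :
    PhiCS β p ≤ PhiCS β q := by
  rw [phiCS_of_pos hp, phiCS_of_pos (hp.trans_le hpq)]
  exact div_le_div_of_nonneg_right
    (sub_le_sub_left (Real.rpow_le_rpow_of_nonpos hp hpq (by linarith)) 1) (by linarith)

lemma hasDerivAt_phiCS (hβ : 1 < β) {y : ℝ} (hy : y ≠ 0) :
    HasDerivAt (PhiCS β) (|y| ^ (-β)) y := by
  have hpos : ∀ {z : ℝ}, 0 < z → HasDerivAt (PhiCS β) (z ^ (-β)) z := fun {z} hz => by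
    have h := ((Real.hasDerivAt_rpow_const (p := 1 - β) (Or.inl hz.ne')).const_sub 1).div_const
      (β - 1)
    have hβ' : β - 1 ≠ 0 := by linarith
    refine (h.congr_deriv ?_).congr_of_eventuallyEq ?_
    · rw [show 1 - β - 1 = -β by ring]
      field_simp
      ring
    · filter_upwards [Ioi_mem_nhds hz] with w hw using phiCS_of_pos hw
  rcases hy.lt_or_gt with hneg | hpos'
  · have h := ((hpos (neg_pos.2 hneg)).comp y (hasDerivAt_neg y)).neg
    rw [abs_of_neg hneg]
    refine (h.congr_deriv (by ring)).congr_of_eventuallyEq (Eventually.of_forall fun z => ?_)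
    simp [phiCS_neg]
  · rw [abs_of_pos hpos']
    exact hpos hpos'

lemma tendsto_phiCS_atTop (hβ : 1 < β) : Tendsto (PhiCS β) atTop (𝓝 (β - 1)⁻¹) := by
  have h := ((tendsto_rpow_neg_atTop (sub_pos.2 hβ)).const_sub 1).div_const (β - 1)
  rw [sub_zero, one_div] at h
  refine h.congr' ?_
  filter_upwards [eventually_gt_atTop 0] with y hy
  rw [phiCS_of_pos hy, neg_sub]

lemma tendsto_phiCS_nhdsGT_zero (hβ : 1 < β) : Tendsto (PhiCS β) (𝓝[>] 0) atBot := by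
  have h := (tendsto_atBot_add_const_left _ 1 (tendsto_neg_atTop_atBot.comp
    (tendsto_rpow_neg_nhdsGT_zero (y := 1 - β) (by linarith)))).atBot_div_const (sub_pos.2 hβ)
  refine h.congr' ?_
  filter_upwards [self_mem_nhdsWithin] with y hy
  rw [phiCS_of_pos hy]
  simp [sub_eq_add_neg, add_comm]

lemma continuousOn_phiCS (hβ : 1 < β) : ContinuousOn (PhiCS β) {0}ᶜ := fun _ hy =>
  (hasDerivAt_phiCS hβ hy).continuousAt.continuousWithinAt

/-- Mean value theorem: the segment between `q` and `p` avoids `0`, and on it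
`Φ' = |y| ^ (-β) ≥ D ^ (-β)`. -/
lemma rpow_neg_mul_sq_le_sub_mul_phiCS_sub (hβ : 1 < β) {p q D : ℝ} (hpq : 0 < p * q)
    (hp : |p| ≤ D) (hq : |q| ≤ D) :
    D ^ (-β) * (p - q) ^ 2 ≤ (p - q) * (PhiCS β p - PhiCS β q) := by
  wlog hle : q ≤ p generalizing p q
  · have := this (by linarith) hq hp (by linarith)
    linarith
  rcases hle.eq_or_lt with rfl | hlt
  · simp
  have hne : ∀ z ∈ Icc q p, z ≠ 0 := by
    rintro z ⟨hqz, hzp⟩ rfl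
    nlinarith
  obtain ⟨c, hc, hslope⟩ := exists_hasDerivAt_eq_slope (PhiCS β) (fun z => |z| ^ (-β)) hlt
    ((continuousOn_phiCS hβ).mono fun z hz => hne z hz)
    (fun z hz => hasDerivAt_phiCS hβ (hne z (Ioo_subset_Icc_self hz)))
  have hc0 : 0 < |c| := abs_pos.2 (hne c (Ioo_subset_Icc_self hc))
  have hcD : |c| ≤ D := (abs_le_max_abs_abs hc.1.le hc.2.le).trans (max_le hq hp)
  have hsub : PhiCS β p - PhiCS β q = |c| ^ (-β) * (p - q) := by
    rw [hslope, div_mul_cancel₀ _ (sub_pos.2 hlt).ne']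
  rw [hsub]
  have := Real.rpow_le_rpow_of_nonpos hc0 hcD (by linarith : -β ≤ 0)
  nlinarith [sq_nonneg (p - q)]

/-- The lower limit is `1` since `Φ` is not integrable at `0` when `β ≥ 2`. -/
noncomputable def potential (β y : ℝ) : ℝ := ∫ s in (1 : ℝ)..|y|, PhiCS β s

lemma hasDerivAt_potential (hβ : 1 < β) {y : ℝ} (hy : y ≠ 0) :
    HasDerivAt (potential β) (PhiCS β y) y := by
  have hcont : ContinuousOn (PhiCS β) (Ioi 0) :=
    (continuousOn_phiCS hβ).mono fun z hz => (ne_of_gt hz)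
  have hprim : HasDerivAt (fun u => ∫ s in (1 : ℝ)..u, PhiCS β s) (PhiCS β |y|) |y| := by
    have hy' : 0 < |y| := abs_pos.2 hy
    refine intervalIntegral.integral_hasDerivAt_right ?_
      (hcont.stronglyMeasurableAtFilter isOpen_Ioi _ hy')
      (hcont.continuousAt (Ioi_mem_nhds hy'))
    refine (hcont.mono fun z hz => ?_).intervalIntegrable
    exact lt_of_lt_of_le (lt_min one_pos hy') hz.1
  refine (hprim.comp y (hasDerivAt_abs hy) : HasDerivAt (potential β) _ y).congr_deriv ?_
  rcases hy.lt_or_gt with h | h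
  · simp [abs_of_neg h, h, phiCS_neg]
  · simp [abs_of_pos h, h]

end Potential


section Antisymm

variable {ι : Type*} (s : Finset ι) {ψ : ι → ι → ℝ}

lemma sum_sum_sub_mul_of_antisymm (hψ : ∀ i k, ψ k i = -ψ i k) (u : ι → ℝ) :
    ∑ i ∈ s, ∑ k ∈ s, (u k - u i) * ψ i k = -2 * ∑ i ∈ s, ∑ k ∈ s, u i * ψ i k := by
  have hswap : ∑ i ∈ s, ∑ k ∈ s, u k * ψ i k = -∑ i ∈ s, ∑ k ∈ s, u i * ψ i k := by
    rw [Finset.sum_comm, ← Finset.sum_neg_distrib]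
    refine Finset.sum_congr rfl fun i _ => ?_
    rw [← Finset.sum_neg_distrib]
    exact Finset.sum_congr rfl fun k _ => by rw [hψ]; ring
  simp only [sub_mul, Finset.sum_sub_distrib, hswap]
  ring

lemma sum_sum_of_antisymm (hψ : ∀ i k, ψ k i = -ψ i k) : ∑ i ∈ s, ∑ k ∈ s, ψ i k = 0 := by
  simpa using sum_sum_sub_mul_of_antisymm s hψ fun _ => 1

end Antisymm

lemma sum_sum_sub_sq {N : ℕ} (u : Fin N → ℝ) :
    ∑ i, ∑ k, (u k - u i) ^ 2 = 2 * N * ∑ i, u i ^ 2 - 2 * (∑ i, u i) ^ 2 := by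
  simp only [sub_sq, Finset.sum_add_distrib, Finset.sum_sub_distrib, Finset.sum_const,
    Finset.card_univ, Fintype.card_fin, nsmul_eq_mul, ← Finset.mul_sum, ← Finset.sum_mul]
  ring

section Energy

variable {N : ℕ} {β : ℝ} (κ : ℝ) (ν : Fin N → ℝ)

lemma phiCS_sub_antisymm (a : Fin N → ℝ) (i k : Fin N) :
    PhiCS β (a i - a k) = -PhiCS β (a k - a i) := by
  rw [← phiCS_neg, neg_sub]

variable (β) in
noncomputable def energy (a : Fin N → ℝ) : ℝ :=
  -∑ i, ν i * a i + κ / (2 * N) * ∑ i, ∑ k, potential β (a k - a i)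

variable (β) in
/-- The gradient of `energy` at a collision-free configuration (`hasDerivAt_energy_line`):
the Cucker–Smale system is the gradient flow `x' = -energyGrad x`. -/
noncomputable def energyGrad (a : Fin N → ℝ) (i : Fin N) : ℝ :=
  -ν i - κ / N * ∑ k, PhiCS β (a k - a i)

lemma sum_energyGrad (hν : ∑ i, ν i = 0) (a : Fin N → ℝ) : ∑ i, energyGrad β κ ν a i = 0 := by
  simp only [energyGrad, Finset.sum_sub_distrib, Finset.sum_neg_distrib, hν, ← Finset.mul_sum,
    sum_sum_of_antisymm _ (phiCS_sub_antisymm a)]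
  simp

lemma energyGrad_add_const (a : Fin N → ℝ) (c : ℝ) :
    energyGrad β κ ν (fun i => a i + c) = energyGrad β κ ν a := by
  funext i
  simp only [energyGrad, add_sub_add_right_eq_sub]

lemma hasDerivAt_energy_line (hβ : 1 < β) {a : Fin N → ℝ} (ha : Function.Injective a)
    (w : Fin N → ℝ) :
    HasDerivAt (fun s : ℝ => energy β κ ν (a + s • w)) (∑ i, w i * energyGrad β κ ν a i) 0 := by
  have hpair : ∀ i k, HasDerivAt (fun s : ℝ => potential β ((a + s • w) k - (a + s • w) i))
      ((w k - w i) * PhiCS β (a k - a i)) 0 := by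
    intro i k
    have hlin : HasDerivAt (fun s : ℝ => (a + s • w) k - (a + s • w) i) (w k - w i) 0 := by
      simpa using ((hasDerivAt_id (0 : ℝ)).mul_const (w k - w i)).const_add (a k - a i)
        |>.congr_of_eventuallyEq (Eventually.of_forall fun s => by simp; ring)
    obtain rfl | hik := eq_or_ne i k
    · simpa using hasDerivAt_const (0 : ℝ) (potential β 0)
    · exact ((hasDerivAt_potential hβ (sub_ne_zero.2 (ha.ne hik.symm))).comp_of_eq 0 hlin
        (by simp)).congr_deriv (mul_comm _ _)
  have hlin : HasDerivAt (fun s : ℝ => -∑ i, ν i * (a + s • w) i) (-∑ i, ν i * w i) 0 :=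
    (HasDerivAt.fun_sum fun i _ => by
      simpa using ((hasDerivAt_id (0 : ℝ)).mul_const (w i)).const_add (a i) |>.const_mul (ν i)).neg
  refine (hlin.add ((HasDerivAt.fun_sum fun i _ => HasDerivAt.fun_sum fun k _ =>
    hpair i k).const_mul (κ / (2 * N)))).congr_deriv ?_
  have hterm : ∀ i, w i * energyGrad β κ ν a i
      = -(ν i * w i) - κ / N * ∑ k, w i * PhiCS β (a k - a i) := fun i => by
    rw [energyGrad, ← Finset.mul_sum]
    ring
  rw [sum_sum_sub_mul_of_antisymm _ (phiCS_sub_antisymm a)]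
  simp only [hterm, Finset.sum_sub_distrib, Finset.sum_neg_distrib, ← Finset.mul_sum]
  ring


lemma continuousAt_energy (hβ : 1 < β) {a : Fin N → ℝ} (ha : Function.Injective a) :
    ContinuousAt (energy β κ ν) a := by
  refine ((continuous_finsetSum _ fun i _ => continuous_const.mul (continuous_apply i)).neg
    |>.continuousAt).add (continuousAt_const.mul (tendsto_finsetSum _ fun i _ =>
      tendsto_finsetSum _ fun k _ => ?_))
  obtain rfl | hik := eq_or_ne i k
  · simp
  · exact ContinuousAt.comp (f := fun c : Fin N → ℝ => c k - c i)
      (hasDerivAt_potential hβ (sub_ne_zero.2 (ha.ne hik.symm))).continuousAt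
      ((continuous_apply k).sub (continuous_apply i)).continuousAt

lemma sum_sub_mul_energyGrad_sub (a b : Fin N → ℝ) :
    ∑ i, (b i - a i) * (energyGrad β κ ν b i - energyGrad β κ ν a i)
      = κ / (2 * N) * ∑ i, ∑ k, ((b k - a k) - (b i - a i))
          * (PhiCS β (b k - b i) - PhiCS β (a k - a i)) := by
  have hψ : ∀ i k : Fin N, PhiCS β (b i - b k) - PhiCS β (a i - a k)
      = -(PhiCS β (b k - b i) - PhiCS β (a k - a i)) := fun i k => by
    rw [phiCS_sub_antisymm b, phiCS_sub_antisymm a]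
    ring
  have hterm : ∀ i, (b i - a i) * (energyGrad β κ ν b i - energyGrad β κ ν a i)
      = -(κ / N) * ∑ k, (b i - a i) * (PhiCS β (b k - b i) - PhiCS β (a k - a i)) := fun i => by
    rw [energyGrad, energyGrad, ← Finset.mul_sum, Finset.sum_sub_distrib]
    ring
  rw [sum_sum_sub_mul_of_antisymm _ hψ fun i => b i - a i]
  simp only [hterm, ← Finset.mul_sum]
  ring

lemma mul_sum_sq_le_sum_sub_mul_energyGrad_sub (hβ : 1 < β) (hκ : 0 ≤ κ) {a b : Fin N → ℝ}
    (ha : StrictMono a) (hb : StrictMono b) (hab : ∑ i, a i = ∑ i, b i) {M : ℝ}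
    (haM : ∀ i, |a i| ≤ M) (hbM : ∀ i, |b i| ≤ M) :
    κ * (2 * M) ^ (-β) * ∑ i, (b i - a i) ^ 2
      ≤ ∑ i, (b i - a i) * (energyGrad β κ ν b i - energyGrad β κ ν a i) := by
  obtain rfl | hN := N.eq_zero_or_pos
  · simp
  have hdiff : ∀ (c : Fin N → ℝ), (∀ i, |c i| ≤ M) → ∀ i k, |c k - c i| ≤ 2 * M :=
    fun c hc i k => (abs_sub _ _).trans (by linarith [hc i, hc k])
  have hpair : ∀ i k, (2 * M) ^ (-β) * ((b k - a k) - (b i - a i)) ^ 2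
      ≤ ((b k - a k) - (b i - a i)) * (PhiCS β (b k - b i) - PhiCS β (a k - a i)) := by
    intro i k
    obtain rfl | hik := eq_or_ne i k
    · simp
    have hsign : 0 < (b k - b i) * (a k - a i) := by
      rcases hik.lt_or_gt with h | h
      · exact mul_pos (sub_pos.2 (hb h)) (sub_pos.2 (ha h))
      · exact mul_pos_of_neg_of_neg (sub_neg.2 (hb h)) (sub_neg.2 (ha h))
    have := rpow_neg_mul_sq_le_sub_mul_phiCS_sub hβ hsign (hdiff b hbM i k) (hdiff a haM i k)
    rwa [show (b k - b i) - (a k - a i) = (b k - a k) - (b i - a i) by ring] at this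
  have hsq : ∑ i, ∑ k, ((b k - a k) - (b i - a i)) ^ 2 = 2 * N * ∑ i, (b i - a i) ^ 2 := by
    rw [sum_sum_sub_sq fun i => b i - a i, Finset.sum_sub_distrib, hab, sub_self]
    ring
  rw [sum_sub_mul_energyGrad_sub]
  calc κ * (2 * M) ^ (-β) * ∑ i, (b i - a i) ^ 2
      = κ / (2 * N) * ((2 * M) ^ (-β) * ∑ i, ∑ k, ((b k - a k) - (b i - a i)) ^ 2) := by
        rw [hsq]
        field_simp
    _ ≤ _ := by
        rw [Finset.mul_sum]
        gcongr with i _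
        rw [Finset.mul_sum]
        exact Finset.sum_le_sum fun k _ => hpair i k

end Energy

section Gaps

variable {N : ℕ}

variable (N) in
def ofGaps : (Fin (N - 1) → ℝ) →ₗ[ℝ] Fin N → ℝ where
  toFun g k := ∑ l : Fin (N - 1) with l.val < k.val, g l
  map_add' g h := by
    ext k
    simp [Finset.sum_add_distrib]
  map_smul' c g := by
    ext k
    simp [Finset.mul_sum]

lemma ofGaps_apply (g : Fin (N - 1) → ℝ) (k : Fin N) :
    ofGaps N g k = ∑ l : Fin (N - 1) with l.val < k.val, g l := rfl

lemma ofGaps_single (l : Fin (N - 1)) (k : Fin N) :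
    ofGaps N (Pi.single l 1) k = if (l : ℕ) < k then 1 else 0 := by
  simp [ofGaps_apply, Pi.single_apply]

lemma le_ofGaps_sub {g : Fin (N - 1) → ℝ} (hg : ∀ l, 0 ≤ g l) {l : Fin (N - 1)} {m k : Fin N}
    (hm : (m : ℕ) ≤ l) (hk : (l : ℕ) < k) : g l ≤ ofGaps N g k - ofGaps N g m := by
  have hsub : univ.filter (fun l' : Fin (N - 1) => l'.val < m.val)
      ⊆ univ.filter (fun l' : Fin (N - 1) => l'.val < k.val) := by
    intro l'
    simp only [Finset.mem_filter, Finset.mem_univ, true_and]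
    omega
  rw [ofGaps_apply, ofGaps_apply, ← Finset.sum_sdiff hsub, add_sub_cancel_right]
  exact Finset.single_le_sum (fun l' _ => hg l') (by simp; omega)

lemma ofGaps_succ_sub (g : Fin (N - 1) → ℝ) (l : Fin (N - 1)) :
    ofGaps N g ⟨l + 1, by omega⟩ - ofGaps N g ⟨l, by omega⟩ = g l := by
  have hins : univ.filter (fun l' : Fin (N - 1) => l'.val < l + 1)
      = insert l (univ.filter fun l' : Fin (N - 1) => l'.val < l) := by
    ext l'
    simp [Fin.ext_iff]
    omega
  rw [ofGaps_apply, ofGaps_apply, Fin.val_mk, Fin.val_mk, hins, Finset.sum_insert (by simp)]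
  ring

lemma strictMono_ofGaps {g : Fin (N - 1) → ℝ} (hg : ∀ l, 0 < g l) : StrictMono (ofGaps N g) := by
  intro m k hmk
  have hmk' : (m : ℕ) < k := hmk
  have := le_ofGaps_sub (fun l => (hg l).le) (l := ⟨m, by omega⟩) le_rfl hmk'
  linarith [hg ⟨m, by omega⟩]

variable (N) in
/-- The agents `0, …, l`, whose total natural velocity enters the `l`-th term of `kappaC`. -/
def lowerBlock (l : Fin (N - 1)) : Finset (Fin N) := {m : Fin N | (m : ℕ) < l + 1}

lemma mem_lowerBlock {l : Fin (N - 1)} {m : Fin N} : m ∈ lowerBlock N l ↔ (m : ℕ) ≤ l := by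
  simp [lowerBlock]

lemma mem_lowerBlock_compl {l : Fin (N - 1)} {k : Fin N} :
    k ∈ (lowerBlock N l)ᶜ ↔ (l : ℕ) < k := by
  simp [lowerBlock]

lemma eq_zero_of_sum_lowerBlock_compl {g : Fin N → ℝ} (hsum : ∑ i, g i = 0)
    (htail : ∀ l, ∑ k ∈ (lowerBlock N l)ᶜ, g k = 0) (i : Fin N) : g i = 0 := by
  have hfrom : ∀ n : ℕ, ∑ k : Fin N with n ≤ k.val, g k = 0 := by
    intro n
    rcases Nat.eq_zero_or_pos n with rfl | hn
    · simpa using hsum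
    rcases lt_or_ge n N with hnN | hnN
    · convert htail ⟨n - 1, by omega⟩ using 2
      ext k
      rw [mem_lowerBlock_compl]
      simp only [Finset.mem_filter, Finset.mem_univ, true_and]
      omega
    · rw [Finset.sum_eq_zero]
      intro k hk
      simp only [mem_filter] at hk
      omega
  have hins : univ.filter (fun k : Fin N => i.val ≤ k.val)
      = insert i (univ.filter fun k : Fin N => i.val + 1 ≤ k.val) := by
    ext k
    simp [Fin.ext_iff]
    omega
  have := hfrom i
  rwa [hins, Finset.sum_insert (by simp), hfrom, add_zero] at this

end Gaps

section Block

variable {N : ℕ} {β : ℝ} (κ : ℝ) (ν : Fin N → ℝ)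

lemma sum_compl_energyGrad (hν : ∑ i, ν i = 0) (a : Fin N → ℝ) (S : Finset (Fin N)) :
    ∑ k ∈ Sᶜ, energyGrad β κ ν a k
      = ∑ m ∈ S, ν m + κ / N * ∑ k ∈ Sᶜ, ∑ m ∈ S, PhiCS β (a k - a m) := by
  have hνS : ∑ m ∈ Sᶜ, ν m = -∑ m ∈ S, ν m := by
    rw [eq_neg_iff_add_eq_zero, add_comm, Finset.sum_add_sum_compl, hν]
  have hsplit : ∀ k, energyGrad β κ ν a k = -ν k + κ / N * ∑ m ∈ S, PhiCS β (a k - a m)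
      + κ / N * ∑ m ∈ Sᶜ, PhiCS β (a k - a m) := fun k => by
    rw [energyGrad, ← Finset.sum_add_sum_compl S]
    simp only [phiCS_sub_antisymm a _ k, Finset.sum_neg_distrib]
    ring
  rw [Finset.sum_congr rfl fun k _ => hsplit k, Finset.sum_add_distrib, Finset.sum_add_distrib,
    Finset.sum_neg_distrib, hνS, ← Finset.mul_sum, ← Finset.mul_sum,
    sum_sum_of_antisymm _ fun i k => phiCS_sub_antisymm a k i]
  ring

/-- The value `sum_compl_energyGrad` would take if every pair across the interface between `S`
and `Sᶜ` interacted with the same strength `y`. -/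
noncomputable def interfacePull (S : Finset (Fin N)) (y : ℝ) : ℝ :=
  ∑ m ∈ S, ν m + κ / N * (#Sᶜ * #S * y)

variable {κ ν}

lemma sum_compl_energyGrad_le (hβ : 1 < β) (hκ : 0 ≤ κ) (hν : ∑ i, ν i = 0) {a : Fin N → ℝ}
    {S : Finset (Fin N)} (hS : ∀ m ∈ S, ∀ k ∉ S, a m < a k) {m₀ k₀ : Fin N} (hm₀ : m₀ ∈ S)
    (hk₀ : k₀ ∉ S) :
    ∑ k ∈ Sᶜ, energyGrad β κ ν a k
      ≤ interfacePull κ ν S (β - 1)⁻¹ + κ / N * PhiCS β (a k₀ - a m₀) := by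
  rw [sum_compl_energyGrad κ ν hν, interfacePull, add_assoc, ← mul_add]
  have hgap : ∀ p ∈ Sᶜ ×ˢ S, 0 ≤ (β - 1)⁻¹ - PhiCS β (a p.1 - a p.2) := by
    rintro ⟨k, m⟩ hp
    rw [Finset.mem_product, Finset.mem_compl] at hp
    exact sub_nonneg.2 (phiCS_lt hβ (sub_pos.2 (hS m hp.2 k hp.1))).le
  have hsingle := Finset.single_le_sum hgap
    (Finset.mem_product.2 ⟨Finset.mem_compl.2 hk₀, hm₀⟩ : (k₀, m₀) ∈ Sᶜ ×ˢ S)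
  rw [Finset.sum_sub_distrib, Finset.sum_const, Finset.card_product, Finset.sum_product,
    nsmul_eq_mul] at hsingle
  have : 0 < (β - 1)⁻¹ := inv_pos.2 (sub_pos.2 hβ)
  gcongr
  push_cast at hsingle
  linarith

lemma le_sum_compl_energyGrad (hβ : 1 < β) (hκ : 0 ≤ κ) (hν : ∑ i, ν i = 0) {a : Fin N → ℝ}
    {S : Finset (Fin N)} {d : ℝ} (hd : 0 < d) (hgap : ∀ m ∈ S, ∀ k ∉ S, d ≤ a k - a m) :
    interfacePull κ ν S (PhiCS β d) ≤ ∑ k ∈ Sᶜ, energyGrad β κ ν a k := by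
  rw [sum_compl_energyGrad κ ν hν, interfacePull]
  gcongr
  calc (#Sᶜ * #S * PhiCS β d : ℝ) = ∑ k ∈ Sᶜ, ∑ m ∈ S, PhiCS β d := by
        simp only [Finset.sum_const, nsmul_eq_mul]
        ring
    _ ≤ _ := Finset.sum_le_sum fun k hk => Finset.sum_le_sum fun m hm =>
        phiCS_le_phiCS hβ hd (hgap m hm k (Finset.mem_compl.1 hk))

end Block

section Existence

variable {N : ℕ} {β κ : ℝ} {ν : Fin N → ℝ}

/-- At a gap `δ` the singular short-range repulsion across it wins whatever the other pairs do;
at a gap `R` the attraction across the interface beats the drift, by supercriticality. -/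
lemma exists_gap_bounds (hβ : 1 < β) (hκ : 0 < κ)
    (hsup : ∀ l, 0 < interfacePull κ ν (lowerBlock N l) (β - 1)⁻¹) :
    ∃ δ R, 0 < δ ∧ δ < R
      ∧ (∀ l, interfacePull κ ν (lowerBlock N l) (β - 1)⁻¹ + κ / N * PhiCS β δ < 0)
      ∧ ∀ l, 0 < interfacePull κ ν (lowerBlock N l) (PhiCS β R) := by
  obtain rfl | hN := N.eq_zero_or_pos
  · exact ⟨1, 2, one_pos, one_lt_two, fun l => l.elim0, fun l => l.elim0⟩
  have hlow : ∀ᶠ δ in 𝓝[>] 0, ∀ l,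
      interfacePull κ ν (lowerBlock N l) (β - 1)⁻¹ + κ / N * PhiCS β δ < 0 :=
    eventually_all.2 fun l => (tendsto_atBot_add_const_left _ _
      ((tendsto_phiCS_nhdsGT_zero hβ).const_mul_atBot (by positivity))).eventually_lt_atBot 0
  obtain ⟨δ, hδ, hδpos⟩ := (hlow.and self_mem_nhdsWithin).exists
  have hhigh : ∀ᶠ R in atTop, ∀ l, 0 < interfacePull κ ν (lowerBlock N l) (PhiCS β R) :=
    eventually_all.2 fun l => ((((tendsto_phiCS_atTop hβ).const_mul _).const_mul _).const_add
      _).eventually_const_lt (hsup l)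
  obtain ⟨R, hR, hδR⟩ := (hhigh.and (eventually_gt_atTop δ)).exists
  exact ⟨δ, R, hδpos, hδR, hδ, hR⟩

/-- Widening the `l`-th gap moves exactly the agents to the right of it. -/
lemma hasDerivAt_energy_ofGaps_add_single (hβ : 1 < β) {g : Fin (N - 1) → ℝ} (hg : ∀ l, 0 < g l)
    (l : Fin (N - 1)) :
    HasDerivAt (fun s : ℝ => energy β κ ν (ofGaps N (g + s • Pi.single l 1)))
      (∑ k ∈ (lowerBlock N l)ᶜ, energyGrad β κ ν (ofGaps N g) k) 0 := by
  simp only [map_add, map_smul]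
  convert hasDerivAt_energy_line κ ν hβ (strictMono_ofGaps hg).injective
    (ofGaps N (Pi.single l 1)) using 1
  rw [lowerBlock, Finset.compl_filter, Finset.sum_filter]
  simp [ofGaps_single]

lemma sum_lowerBlock_compl_energyGrad_eq_zero_of_isMinOn (hβ : 1 < β) (hκ : 0 < κ)
    (hν : ∑ i, ν i = 0) {δ R : ℝ} (hδ : 0 < δ) (hδR : δ < R)
    (hlow : ∀ l, interfacePull κ ν (lowerBlock N l) (β - 1)⁻¹ + κ / N * PhiCS β δ < 0)
    (hhigh : ∀ l, 0 < interfacePull κ ν (lowerBlock N l) (PhiCS β R))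
    {g : Fin (N - 1) → ℝ} (hg : g ∈ Icc (fun _ => δ) (fun _ => R))
    (hmin : IsMinOn (energy β κ ν ∘ ofGaps N) (Icc (fun _ => δ) (fun _ => R)) g)
    (l : Fin (N - 1)) :
    ∑ k ∈ (lowerBlock N l)ᶜ, energyGrad β κ ν (ofGaps N g) k = 0 := by
  have hgpos : ∀ l, 0 < g l := fun l => hδ.trans_le (hg.1 l)
  have hderiv := hasDerivAt_energy_ofGaps_add_single (κ := κ) (ν := ν) hβ hgpos l
  have hline : ∀ s, δ ≤ g l + s → g l + s ≤ R →
      energy β κ ν (ofGaps N (g + (0 : ℝ) • Pi.single l 1))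
        ≤ energy β κ ν (ofGaps N (g + s • Pi.single l 1)) := by
    intro s h₁ h₂
    rw [zero_smul, add_zero]
    refine hmin ⟨fun l' => ?_, fun l' => ?_⟩ <;> obtain rfl | hl' := eq_or_ne l' l <;>
      simp_all [hg.1 l', hg.2 l']
  have hnonneg : g l < R → 0 ≤ ∑ k ∈ (lowerBlock N l)ᶜ, energyGrad β κ ν (ofGaps N g) k :=
    fun h => hderiv.nonneg_of_le_right (sub_pos.2 h) fun s hs =>
      hline s (by linarith [hs.1, hg.1 l]) (by linarith [hs.2])
  have hnonpos : δ < g l → ∑ k ∈ (lowerBlock N l)ᶜ, energyGrad β κ ν (ofGaps N g) k ≤ 0 :=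
    fun h => hderiv.nonpos_of_le_left (sub_neg.2 h) fun s hs =>
      hline s (by linarith [hs.1]) (by linarith [hs.2, hg.2 l])
  have hgap : ∀ m ∈ lowerBlock N l, ∀ k ∉ lowerBlock N l, g l ≤ ofGaps N g k - ofGaps N g m :=
    fun m hm k hk => le_ofGaps_sub (fun l => (hgpos l).le) (mem_lowerBlock.1 hm)
      (mem_lowerBlock_compl.1 (Finset.mem_compl.2 hk))
  have hltR : g l < R := by
    by_contra! h
    have := le_sum_compl_energyGrad hβ hκ.le hν (hδ.trans hδR) fun m hm k hk =>
      h.trans (hgap m hm k hk)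
    linarith [hhigh l, hnonpos (hδR.trans_le h)]
  have hgtδ : δ < g l := by
    by_contra! h
    have := sum_compl_energyGrad_le hβ hκ.le hν
      (fun m hm k hk => sub_pos.1 ((hgpos l).trans_le (hgap m hm k hk)))
      (m₀ := ⟨l, by omega⟩) (k₀ := ⟨l + 1, by omega⟩) (mem_lowerBlock.2 le_rfl)
      (fun hk => by simp [mem_lowerBlock] at hk)
    rw [ofGaps_succ_sub, le_antisymm h (hg.1 l)] at this
    linarith [hlow l, hnonneg hltR]
  exact le_antisymm (hnonpos hgtδ) (hnonneg hltR)

theorem exists_strictMono_energyGrad_eq_zero (hβ : 1 < β) (hκ : 0 < κ) (hν : ∑ i, ν i = 0)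
    (hsup : ∀ l, 0 < interfacePull κ ν (lowerBlock N l) (β - 1)⁻¹) :
    ∃ xs : Fin N → ℝ, StrictMono xs ∧ ∑ i, xs i = 0 ∧ ∀ i, energyGrad β κ ν xs i = 0 := by
  obtain ⟨δ, R, hδ, hδR, hlow, hhigh⟩ := exists_gap_bounds hβ hκ hsup
  have hmono : ∀ g ∈ Icc (fun _ : Fin (N - 1) => δ) (fun _ => R), StrictMono (ofGaps N g) :=
    fun g hg => strictMono_ofGaps fun l => hδ.trans_le (hg.1 l)
  obtain ⟨g, hg, hmin⟩ := isCompact_Icc.exists_isMinOn (nonempty_Icc.2 fun _ => hδR.le)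
    fun g hg => ((continuousAt_energy κ ν hβ (hmono g hg).injective).comp
      (ofGaps N).continuous_of_finiteDimensional.continuousAt).continuousWithinAt
  have hcrit := eq_zero_of_sum_lowerBlock_compl (sum_energyGrad κ ν hν (ofGaps N g))
    (sum_lowerBlock_compl_energyGrad_eq_zero_of_isMinOn hβ hκ hν hδ hδR hlow hhigh hg hmin)
  set c := -(∑ k, ofGaps N g k) / N
  refine ⟨fun i => ofGaps N g i + c, fun i j hij => (add_lt_add_iff_right c).2 (hmono g hg hij), ?_,
    fun i => by rw [energyGrad_add_const, hcrit]⟩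
  obtain rfl | hN := N.eq_zero_or_pos
  · simp
  rw [Finset.sum_add_distrib, Finset.sum_const, Finset.card_univ, Fintype.card_fin, nsmul_eq_mul]
  simp only [c]
  field_simp
  ring

lemma supercritical_of_kappaC_lt (hβ : 1 < β) (hcrit : kappaC N β ν < κ) (l : Fin (N - 1)) :
    0 < interfacePull κ ν (lowerBlock N l) (β - 1)⁻¹ := by
  have hl : (l : ℕ) + 1 < N := by omega
  have hle := (le_ciSup (Set.finite_range _).bddAbove l).trans_lt hcrit
  have hcard : #(lowerBlock N l) = l + 1 := by
    rw [lowerBlock, Fin.card_filter_val_lt, min_eq_right hl.le]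
  have hcard_compl : (#(lowerBlock N l)ᶜ : ℝ) = N - (l + 1) := by
    rw [Finset.card_compl, Fintype.card_fin, hcard, Nat.cast_sub hl.le]
    push_cast
    ring
  have hsum : ∑ i : Fin N, (if (i : ℕ) < (l : ℕ) + 1 then ν i else 0)
      = ∑ m ∈ lowerBlock N l, ν m := by
    rw [lowerBlock, Finset.sum_filter]
  have hpos : 0 < ((l : ℝ) + 1) * (N - (l + 1)) := by
    have : ((l : ℕ) : ℝ) + 1 < N := by exact_mod_cast hl
    nlinarith
  have hβ' : 0 < β - 1 := sub_pos.2 hβ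
  simp only [hsum] at hle
  rw [div_lt_iff₀ hpos] at hle
  rw [interfacePull, hcard_compl, hcard]
  push_cast
  have key : 0 < (N : ℝ) * (β - 1) * ∑ m ∈ lowerBlock N l, ν m + κ * ((N - (l + 1)) * (l + 1)) := by
    linarith
  have hN : (0 : ℝ) < N := by exact_mod_cast (by omega : 0 < N)
  calc (0 : ℝ) < ((N : ℝ) * (β - 1) * ∑ m ∈ lowerBlock N l, ν m + κ * ((N - (l + 1)) * (l + 1)))
        / (N * (β - 1)) := div_pos key (by positivity)
    _ = _ := by field_simp

end Existence

end CuckerSmale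

namespace IsCFSol

open CuckerSmale Finset

variable {N : ℕ} {β κ : ℝ} {ν : Fin N → ℝ} {x : ℝ → Fin N → ℝ}

lemma hasDerivWithinAt (hx : IsCFSol N β κ ν x) (i : Fin N) {t : ℝ} (ht : 0 ≤ t) :
    HasDerivWithinAt (fun s => x s i) (-energyGrad β κ ν (x t) i) (Ici 0) t := by
  convert hx.2.2 i t ht using 1
  rw [energyGrad, ← Finset.sum_erase_add _ _ (mem_univ i), sub_self, phiCS_zero, add_zero]
  ring

lemma strictMono (hx : IsCFSol N β κ ν x) (hx0 : StrictMono (x 0)) {t : ℝ}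
    (ht : 0 ≤ t) : StrictMono (x t) := by
  intro i j hij
  by_contra! hle
  have hcont : ContinuousOn (fun s => x s j - x s i) (Icc 0 t) := fun s hs =>
    ((hx.2.2 j s hs.1).sub (hx.2.2 i s hs.1)).continuousWithinAt.mono Icc_subset_Ici_self
  obtain ⟨c, hc, hc0⟩ :=
    intermediate_value_Icc' ht hcont ⟨sub_nonpos.2 hle, (sub_pos.2 (hx0 hij)).le⟩
  exact hx.1 c hc.1 i j hij.ne (sub_eq_zero.1 hc0).symm

lemma sum_eq_zero (hx : IsCFSol N β κ ν x) (hν : ∑ i, ν i = 0) {t : ℝ} (ht : 0 ≤ t) :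
    ∑ i, x t i = 0 := by
  have hderiv : ∀ s ≥ 0, HasDerivWithinAt (fun s => ∑ i, x s i) 0 (Ici 0) s := fun s hs => by
    refine (HasDerivWithinAt.fun_sum (u := univ) fun i _ => hx.hasDerivWithinAt i hs).congr_deriv ?_
    rw [Finset.sum_neg_distrib, sum_energyGrad κ ν hν, neg_zero]
  rw [← hx.2.1]
  exact constant_of_has_deriv_right_zero
    (fun s hs => (hderiv s hs.1).continuousWithinAt.mono Icc_subset_Ici_self)
    (fun s hs => (hderiv s hs.1).mono (Ici_subset_Ici.2 hs.1)) t ⟨ht, le_rfl⟩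

lemma hasDerivWithinAt_sum_sq_sub (hx : IsCFSol N β κ ν x) {xs : Fin N → ℝ}
    (hcrit : ∀ i, energyGrad β κ ν xs i = 0) {t : ℝ} (ht : 0 ≤ t) :
    HasDerivWithinAt (fun t => ∑ i, (x t i - xs i) ^ 2)
      (-2 * ∑ i, (x t i - xs i) * (energyGrad β κ ν (x t) i - energyGrad β κ ν xs i))
      (Ici 0) t := by
  refine (HasDerivWithinAt.fun_sum fun i _ =>
    ((hx.hasDerivWithinAt i ht).sub_const (xs i)).pow 2).congr_deriv ?_
  simp only [hcrit, sub_zero, Finset.mul_sum]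
  exact Finset.sum_congr rfl fun i _ => by push_cast; ring

lemma antitoneOn_sum_sq_sub (hβ : 1 < β) (hκ : 0 ≤ κ) (hν : ∑ i, ν i = 0)
    (hx : IsCFSol N β κ ν x) (hx0 : StrictMono (x 0)) {xs : Fin N → ℝ} (hxs : StrictMono xs)
    (hsum : ∑ i, xs i = 0) (hcrit : ∀ i, energyGrad β κ ν xs i = 0) :
    AntitoneOn (fun t => ∑ i, (x t i - xs i) ^ 2) (Ici 0) := by
  refine antitoneOn_Ici_of_hasDerivWithinAt (fun t ht => hx.hasDerivWithinAt_sum_sq_sub hcrit ht)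
    fun t ht => ?_
  set M := ∑ k, |x t k| + ∑ k, |xs k|
  have hxM : ∀ i, |x t i| ≤ M := fun i => by
    linarith [Finset.single_le_sum (f := fun k => |x t k|) (fun k _ => abs_nonneg _) (mem_univ i),
      show 0 ≤ ∑ k, |xs k| by positivity]
  have hxsM : ∀ i, |xs i| ≤ M := fun i => by
    linarith [Finset.single_le_sum (f := fun k => |xs k|) (fun k _ => abs_nonneg _) (mem_univ i),
      show 0 ≤ ∑ k, |x t k| by positivity]
  have hmono := mul_sum_sq_le_sum_sub_mul_energyGrad_sub κ ν hβ hκ hxs (hx.strictMono hx0 ht)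
    (by rw [hsum, hx.sum_eq_zero hν ht]) hxsM hxM
  have : 0 ≤ κ * (2 * M) ^ (-β) * ∑ i, (x t i - xs i) ^ 2 := by positivity
  linarith

theorem tendsto_of_energyGrad_eq_zero (hβ : 1 < β) (hκ : 0 < κ) (hν : ∑ i, ν i = 0)
    (hx : IsCFSol N β κ ν x) (hx0 : StrictMono (x 0)) {xs : Fin N → ℝ} (hxs : StrictMono xs)
    (hsum : ∑ i, xs i = 0) (hcrit : ∀ i, energyGrad β κ ν xs i = 0) (i : Fin N) :
    Tendsto (fun t => x t i) atTop (𝓝 (xs i)) := by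
  set G : ℝ → ℝ := fun t => ∑ i, (x t i - xs i) ^ 2
  have hG0 : ∀ t, 0 ≤ G t := fun t => Finset.sum_nonneg fun i _ => sq_nonneg _
  have hle_G : ∀ t i, |x t i - xs i| ≤ √(G t) := fun t i =>
    Real.abs_le_sqrt (Finset.single_le_sum (f := fun i => (x t i - xs i) ^ 2)
      (fun i _ => sq_nonneg _) (mem_univ i))
  have hanti := antitoneOn_sum_sq_sub hβ hκ.le hν hx hx0 hxs hsum hcrit
  set M := √(G 0) + ∑ k, |xs k| + 1
  have hxs_le : ∀ i, |xs i| ≤ ∑ k, |xs k| := fun i =>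
    Finset.single_le_sum (f := fun k => |xs k|) (fun k _ => abs_nonneg _) (mem_univ i)
  have hxsM : ∀ i, |xs i| ≤ M := fun i => by linarith [hxs_le i, Real.sqrt_nonneg (G 0)]
  have hxM : ∀ t ≥ 0, ∀ i, |x t i| ≤ M := fun t ht i => by
    have : √(G t) ≤ √(G 0) := Real.sqrt_le_sqrt (hanti self_mem_Ici ht ht)
    linarith [hle_G t i, abs_sub_abs_le_abs_sub (x t i) (xs i), hxs_le i]
  have hc : 0 < 2 * κ * (2 * M) ^ (-β) := by
    have : 0 < M := by positivity
    positivity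
  have hdecay : ∀ t ≥ 0, G t ≤ G 0 * exp (-(2 * κ * (2 * M) ^ (-β)) * t) := fun t ht =>
    le_mul_exp_neg_of_hasDerivWithinAt (fun s hs => hx.hasDerivWithinAt_sum_sq_sub hcrit hs)
      (fun s hs => by
        linarith [mul_sum_sq_le_sum_sub_mul_energyGrad_sub κ ν hβ hκ.le hxs (hx.strictMono hx0 hs)
          (by rw [hsum, hx.sum_eq_zero hν hs]) hxsM (hxM s hs)]) ht
  have hGlim : Tendsto G atTop (𝓝 0) := by
    refine squeeze_zero' (Eventually.of_forall hG0)
      (eventually_atTop.2 ⟨0, fun t ht => hdecay t ht⟩) ?_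
    simpa using ((tendsto_exp_atBot.comp
      (tendsto_id.const_mul_atTop_of_neg (neg_neg_of_pos hc)))).const_mul (G 0)
  exact tendsto_sub_nhds_zero_iff.1
    (squeeze_zero_norm (fun t => hle_G t i) (by simpa using hGlim.sqrt))

end IsCFSol

theorem stmt12_general (N : ℕ) (β κ : ℝ) (hβ : 1 < β) (hκ : 0 < κ)
    (ν : Fin N → ℝ) (hν : ∑ i, ν i = 0)
    (x : ℝ → Fin N → ℝ) (hx : IsCFSol N β κ ν x)
    (hx0 : StrictMono (x 0)) (hcrit : kappaC N β ν < κ) :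
    ∀ i j : Fin N, ∃ L : ℝ, Tendsto (fun t => |x t i - x t j|) atTop (𝓝 L) := by
  obtain ⟨xs, hxs, hsum, hgrad⟩ :=
    CuckerSmale.exists_strictMono_energyGrad_eq_zero hβ hκ hν
      (CuckerSmale.supercritical_of_kappaC_lt hβ hcrit)
  have hlim := hx.tendsto_of_energyGrad_eq_zero hβ hκ hν hx0 hxs hsum hgrad
  exact fun i j => ⟨|xs i - xs j|, ((hlim i).sub (hlim j)).abs⟩

/-- Supercritical coupling implies mono-cluster flocking. -/
theorem stmt12 (N : ℕ) (hN : 2 ≤ N) (β κ : ℝ) (hβ : 1 < β) (hκ : 0 < κ)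
    (ν : Fin N → ℝ) (hν : ∑ i, ν i = 0)
    (x : ℝ → Fin N → ℝ) (hx : IsCFSol N β κ ν x)
    (hx0 : StrictMono (x 0)) (hcrit : kappaC N β ν < κ) :
    ∀ i j : Fin N, ∃ L : ℝ, Tendsto (fun t => |x t i - x t j|) atTop (𝓝 L) :=
  stmt12_general N β κ hβ hκ ν hν x hx hx0 hcrit
end

section
/- Let x be a collision-free solution of the first-order singular Cucker–Smale system with β > 1 for which x_1(t) < x_2(t) < … < x_N(t) for all t ≥ 0. Suppose that the index block I = {a+1, …, b} (with 0 ≤ a < b ≤ N) is a maximal cluster, i.e., sup_{t ≥ 0} |x_k(t) − x_l(t)| < ∞ for all k, l ∈ I, and |x_k(t) − x_l(t)| → ∞ as t → ∞ whenever k ∈ I and l ∉ I. Then the average velocity of the cluster converges: (1/(b−a)) Σ_{i=a+1}^{b} x_i'(t) → (1/(b−a)) Σ_{i=a+1}^{b} ν_i + κ(N − b − a)/(N(β−1)) as t → ∞. -/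
open Real Filter Set Topology

/-!
Summed over the cluster, the mutual interactions of its members cancel because `Φ` is odd, so
only the particles outside the cluster move its mean velocity. They separate from the cluster,
hence each `Φ(x_k − x_i)` tends to `±Φ^∞`, the sign being fixed by the ordering: `−Φ^∞` for each
of the `a` particles on the left and `+Φ^∞` for each of the `N − b` particles on the right.
-/

open Finset

lemma PhiCS_neg (β y : ℝ) : PhiCS β (-y) = -PhiCS β y := by
  simp [PhiCS, Real.sign_neg, neg_div]

lemma PhiCS_zero (β : ℝ) : PhiCS β 0 = 0 := by
  simp [PhiCS]

lemma PhiCS_of_pos {β y : ℝ} (hy : 0 < y) : PhiCS β y = (1 - y ^ (1 - β)) / (β - 1) := by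
  simp [PhiCS, Real.sign_of_pos hy, abs_of_pos hy]

lemma tendsto_PhiCS_atTop {β : ℝ} (hβ : 1 < β) :
    Tendsto (PhiCS β) atTop (𝓝 (β - 1)⁻¹) := by
  have hpow : Tendsto (fun y : ℝ => y ^ (1 - β)) atTop (𝓝 0) := by
    simpa only [neg_sub] using tendsto_rpow_neg_atTop (sub_pos.mpr hβ)
  have hlim := (tendsto_const_nhds (x := (1:ℝ)).sub hpow).div_const (β - 1)
  rw [sub_zero, one_div] at hlim
  exact hlim.congr' <| (eventually_gt_atTop 0).mono fun y hy => (PhiCS_of_pos hy).symm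

lemma Finset.sum_sum_eq_zero_of_antisymm {ι : Type*} (s : Finset ι) (f : ι → ι → ℝ)
    (hf : ∀ i j, f j i = -f i j) : ∑ i ∈ s, ∑ j ∈ s, f i j = 0 := by
  have h : ∑ i ∈ s, ∑ j ∈ s, f i j = -∑ i ∈ s, ∑ j ∈ s, f i j :=
    calc ∑ i ∈ s, ∑ j ∈ s, f i j = ∑ j ∈ s, ∑ i ∈ s, -f j i := by
          rw [sum_comm]; exact sum_congr rfl fun j _ => sum_congr rfl fun i _ => hf j i
      _ = -∑ i ∈ s, ∑ j ∈ s, f i j := by simp only [sum_neg_distrib]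
  linarith

lemma sum_sum_erase_PhiCS_eq_sum_compl {ι : Type*} [Fintype ι] [DecidableEq ι] (β : ℝ)
    (y : ι → ℝ) (I : Finset ι) :
    ∑ i ∈ I, ∑ k ∈ univ.erase i, PhiCS β (y k - y i) = ∑ i ∈ I, ∑ k ∈ Iᶜ, PhiCS β (y k - y i) := by
  have hself : ∑ i ∈ I, ∑ k ∈ I, PhiCS β (y k - y i) = 0 :=
    I.sum_sum_eq_zero_of_antisymm _ fun i k => by rw [← PhiCS_neg, neg_sub]
  have hrow : ∀ i, ∑ k ∈ univ.erase i, PhiCS β (y k - y i) = ∑ k, PhiCS β (y k - y i) := by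
    intro i
    rw [← add_sum_erase _ _ (mem_univ i), sub_self, PhiCS_zero, zero_add]
  simp only [hrow, ← sum_add_sum_compl I, sum_add_distrib, hself, zero_add]

lemma tendsto_atTop_of_abs_of_eventually_pos {α : Type*} {l : Filter α} {g : α → ℝ}
    (hpos : ∀ᶠ t in l, 0 < g t) (habs : Tendsto (fun t => |g t|) l atTop) :
    Tendsto g l atTop :=
  habs.congr' <| hpos.mono fun _ h => abs_of_pos h

lemma card_filter_val_mem_Ico {N a b : ℕ} (hbN : b ≤ N) :
    #{i : Fin N | a ≤ (i:ℕ) ∧ (i:ℕ) < b} = b - a := by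
  rw [← card_map Fin.valEmbedding, ← Nat.card_Ico]
  congr 1
  ext n
  simp only [Finset.mem_map, mem_filter, Finset.mem_univ, true_and, Fin.valEmbedding_apply,
    Finset.mem_Ico]
  exact ⟨fun ⟨i, hi, h⟩ => h ▸ hi, fun hn => ⟨⟨n, by omega⟩, hn, rfl⟩⟩

lemma sum_compl_cluster_ite {N a b : ℕ} (hab : a ≤ b) (hbN : b ≤ N) (c : ℝ) :
    ∑ k ∈ (univ.filter fun k : Fin N => a ≤ (k:ℕ) ∧ (k:ℕ) < b)ᶜ,
      (if (k:ℕ) < a then -c else c) = ((N:ℝ) - b - a) * c := by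
  have hbefore : #{k : Fin N | (k:ℕ) < a} = a := by
    rw [Fin.card_filter_val_lt]; omega
  have hafter : #{k : Fin N | ¬(k:ℕ) < a} = N - a := by
    have := card_filter_add_card_filter_not (s := univ) fun k : Fin N => (k:ℕ) < a
    rw [card_univ, Fintype.card_fin] at this
    omega
  have hall : ∑ k : Fin N, (if (k:ℕ) < a then -c else c) = ((N:ℝ) - 2 * a) * c := by
    rw [sum_ite, sum_const, sum_const, hbefore, hafter, nsmul_eq_mul, nsmul_eq_mul,
      Nat.cast_sub (hab.trans hbN)]
    ring
  have hcluster : ∑ k ∈ univ.filter (fun k : Fin N => a ≤ (k:ℕ) ∧ (k:ℕ) < b),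
      (if (k:ℕ) < a then -c else c) = ((b:ℝ) - a) * c := by
    rw [sum_ite_of_false (fun k hk => by simp only [mem_filter] at hk; omega), sum_const,
      card_filter_val_mem_Ico hbN, nsmul_eq_mul, Nat.cast_sub hab]
  have := sum_compl_add_sum (univ.filter fun k : Fin N => a ≤ (k:ℕ) ∧ (k:ℕ) < b)
    fun k : Fin N => if (k:ℕ) < a then -c else c
  linarith

lemma tendsto_PhiCS_sub_of_lt {ι : Type*} [Preorder ι] {β : ℝ} (hβ : 1 < β) {x : ℝ → ι → ℝ}
    (hord : ∀ᶠ t in atTop, StrictMono (x t)) {i k : ι} (hik : i < k)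
    (hsep : Tendsto (fun t => |x t k - x t i|) atTop atTop) :
    Tendsto (fun t => PhiCS β (x t k - x t i)) atTop (𝓝 (β - 1)⁻¹) :=
  (tendsto_PhiCS_atTop hβ).comp <| tendsto_atTop_of_abs_of_eventually_pos
    (hord.mono fun _ h => sub_pos.mpr (h hik)) hsep

lemma tendsto_PhiCS_sub_of_gt {ι : Type*} [Preorder ι] {β : ℝ} (hβ : 1 < β) {x : ℝ → ι → ℝ}
    (hord : ∀ᶠ t in atTop, StrictMono (x t)) {i k : ι} (hki : k < i)
    (hsep : Tendsto (fun t => |x t k - x t i|) atTop atTop) :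
    Tendsto (fun t => PhiCS β (x t k - x t i)) atTop (𝓝 (-(β - 1)⁻¹)) := by
  have := (tendsto_PhiCS_sub_of_lt hβ hord hki (by simpa only [abs_sub_comm] using hsep)).neg
  simpa only [← PhiCS_neg, neg_sub] using this

lemma tendsto_sum_compl_cluster_PhiCS {N a b : ℕ} (hab : a ≤ b) (hbN : b ≤ N) {β : ℝ}
    (hβ : 1 < β) {x : ℝ → Fin N → ℝ} (hord : ∀ᶠ t in atTop, StrictMono (x t))
    (hsep : ∀ k l : Fin N, a ≤ (k:ℕ) → (k:ℕ) < b → ¬(a ≤ (l:ℕ) ∧ (l:ℕ) < b) →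
      Tendsto (fun t => |x t k - x t l|) atTop atTop)
    {i : Fin N} (hia : a ≤ (i:ℕ)) (hib : (i:ℕ) < b) :
    Tendsto (fun t => ∑ k ∈ (univ.filter fun k : Fin N => a ≤ (k:ℕ) ∧ (k:ℕ) < b)ᶜ,
      PhiCS β (x t k - x t i)) atTop (𝓝 (((N:ℝ) - b - a) * (β - 1)⁻¹)) := by
  rw [← sum_compl_cluster_ite hab hbN]
  refine tendsto_finsetSum _ fun k hk => ?_
  have hk' : ¬(a ≤ (k:ℕ) ∧ (k:ℕ) < b) := by simpa using hk
  have hsep' : Tendsto (fun t => |x t k - x t i|) atTop atTop := by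
    simpa only [abs_sub_comm] using hsep i k hia hib hk'
  split_ifs with hka
  · exact tendsto_PhiCS_sub_of_gt hβ hord (Fin.lt_def.mpr (by omega)) hsep'
  · exact tendsto_PhiCS_sub_of_lt hβ hord (Fin.lt_def.mpr (by omega)) hsep'

theorem stmt14_general (N : ℕ) (β κ : ℝ) (hβ : 1 < β)
    (ν : Fin N → ℝ)
    (x : ℝ → Fin N → ℝ)
    (hord : ∀ t ≥ (0:ℝ), StrictMono (x t))
    (a b : ℕ) (hab : a < b) (hbN : b ≤ N)
    (hsep : ∀ k l : Fin N, a ≤ (k:ℕ) → (k:ℕ) < b → ¬(a ≤ (l:ℕ) ∧ (l:ℕ) < b) →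
      Tendsto (fun t => |x t k - x t l|) atTop atTop) :
    Tendsto (fun t =>
        (1 / ((b:ℝ) - (a:ℝ))) * ∑ i ∈ Finset.univ.filter
          (fun i : Fin N => a ≤ (i:ℕ) ∧ (i:ℕ) < b),
          (ν i + (κ / (N:ℝ)) * ∑ k ∈ Finset.univ.erase i, PhiCS β (x t k - x t i)))
      atTop
      (𝓝 ((1 / ((b:ℝ) - (a:ℝ))) * (∑ i ∈ Finset.univ.filter
          (fun i : Fin N => a ≤ (i:ℕ) ∧ (i:ℕ) < b), ν i) +
        κ * ((N:ℝ) - (b:ℝ) - (a:ℝ)) / ((N:ℝ) * (β - 1)))) := by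
  set I := univ.filter fun i : Fin N => a ≤ (i:ℕ) ∧ (i:ℕ) < b
  have hN : (N:ℝ) ≠ 0 := Nat.cast_ne_zero.mpr (by omega)
  have hba : (b:ℝ) - a ≠ 0 := sub_ne_zero.mpr (by exact_mod_cast hab.ne')
  have hsplit : ∀ t, ∑ i ∈ I, (ν i + (κ / N) * ∑ k ∈ univ.erase i, PhiCS β (x t k - x t i)) =
      ∑ i ∈ I, ν i + (κ / N) * ∑ i ∈ I, ∑ k ∈ Iᶜ, PhiCS β (x t k - x t i) := fun t => by
    rw [sum_add_distrib, ← mul_sum, sum_sum_erase_PhiCS_eq_sum_compl]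
  have hinteraction : Tendsto (fun t => ∑ i ∈ I, ∑ k ∈ Iᶜ, PhiCS β (x t k - x t i)) atTop
      (𝓝 (((b:ℝ) - a) * (((N:ℝ) - b - a) * (β - 1)⁻¹))) := by
    have := tendsto_finsetSum I fun i hi =>
      tendsto_sum_compl_cluster_PhiCS hab.le hbN hβ (eventually_ge_atTop 0 |>.mono hord) hsep
        (mem_filter.1 hi).2.1 (mem_filter.1 hi).2.2
    rwa [sum_const, card_filter_val_mem_Ico hbN, nsmul_eq_mul, Nat.cast_sub hab.le] at this
  have hlimit : (1 / ((b:ℝ) - a)) * ∑ i ∈ I, ν i + κ * ((N:ℝ) - b - a) / (N * (β - 1)) =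
      (1 / ((b:ℝ) - a)) *
        (∑ i ∈ I, ν i + (κ / N) * (((b:ℝ) - a) * (((N:ℝ) - b - a) * (β - 1)⁻¹))) := by
    field_simp
  simp_rw [hsplit]
  rw [hlimit]
  exact (tendsto_const_nhds.add (hinteraction.const_mul _)).const_mul _

/-- The asymptotic group velocity of a maximal cluster `{a+1, …, b}` (1-based),
i.e. the indices `i` with `a ≤ i < b` in 0-based indexing: the average velocity
of the cluster converges to `ν̄ + κ(N − b − a)Φ^∞/N`. -/
theorem stmt14 (N : ℕ) (hN : 2 ≤ N) (β κ : ℝ) (hβ : 1 < β) (hκ : 0 < κ)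
    (ν : Fin N → ℝ) (hν : ∑ i, ν i = 0)
    (x : ℝ → Fin N → ℝ) (hx : IsCFSol N β κ ν x)
    (hord : ∀ t ≥ (0:ℝ), StrictMono (x t))
    (a b : ℕ) (hab : a < b) (hbN : b ≤ N)
    (hbound : ∀ k l : Fin N, a ≤ (k:ℕ) → (k:ℕ) < b → a ≤ (l:ℕ) → (l:ℕ) < b →
      ∃ M : ℝ, ∀ t ≥ (0:ℝ), |x t k - x t l| ≤ M)
    (hsep : ∀ k l : Fin N, a ≤ (k:ℕ) → (k:ℕ) < b → ¬(a ≤ (l:ℕ) ∧ (l:ℕ) < b) →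
      Tendsto (fun t => |x t k - x t l|) atTop atTop) :
    Tendsto (fun t =>
        (1 / ((b:ℝ) - (a:ℝ))) * ∑ i ∈ Finset.univ.filter
          (fun i : Fin N => a ≤ (i:ℕ) ∧ (i:ℕ) < b),
          (ν i + (κ / (N:ℝ)) * ∑ k ∈ Finset.univ.erase i, PhiCS β (x t k - x t i)))
      atTop
      (𝓝 ((1 / ((b:ℝ) - (a:ℝ))) * (∑ i ∈ Finset.univ.filter
          (fun i : Fin N => a ≤ (i:ℕ) ∧ (i:ℕ) < b), ν i) +
        κ * ((N:ℝ) - (b:ℝ) - (a:ℝ)) / ((N:ℝ) * (β - 1)))) :=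
  stmt14_general N β κ hβ ν x hord a b hab hbN hsep
end

section
/- Fix β > 1, κ > 0, an integer N ≥ 1, an integer M with 2 ≤ M, and reals ν_1, …, ν_M. Suppose y = (y_1, …, y_M) and ȳ = (ȳ_1, …, ȳ_M) are two strictly increasing vectors in ℝ^M (y_1 < y_2 < … < y_M and ȳ_1 < ȳ_2 < … < ȳ_M) with Σ_{i=1}^M y_i = Σ_{i=1}^M ȳ_i = 0, and each solves the equilibrium system ν_i + (κ/N) Σ_{k≠i} Φ(y_k − y_i) = 0 for all i = 1, …, M. Then y = ȳ; i.e., the sorted solution of the constrained equilibrium system is unique. -/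
open Real

lemma phiCS_neg (β x : ℝ) : PhiCS β (-x) = -PhiCS β x := by
  unfold PhiCS
  rw [abs_neg, Real.sign_neg]
  ring

lemma phiCS_lt_pos {β : ℝ} (hβ : 1 < β) {a b : ℝ} (ha : 0 < a) (hab : a < b) :
    PhiCS β a < PhiCS β b := by
  have hb : 0 < b := ha.trans hab
  unfold PhiCS
  rw [Real.sign_of_pos ha, Real.sign_of_pos hb]
  rw [abs_of_pos ha, abs_of_pos hb]
  have h1 : b ^ (1-β) < a ^ (1-β) :=
    Real.rpow_lt_rpow_of_neg ha hab (by linarith)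
  have h2 : (0:ℝ) < β - 1 := by linarith
  apply div_lt_div_of_pos_right _ h2
  nlinarith

lemma phiCS_lt {β : ℝ} (hβ : 1 < β) {a b : ℝ} (hab : a < b)
    (hsame : 0 < a ∨ b < 0) : PhiCS β a < PhiCS β b := by
  rcases hsame with ha | hb
  · exact phiCS_lt_pos hβ ha hab
  · have := phiCS_lt_pos hβ (by linarith : 0 < -b) (by linarith : -b < -a)
    rw [phiCS_neg, phiCS_neg] at this
    linarith

/-- Uniqueness (up to permutation, i.e. among sorted configurations) of the solution
of the constrained equilibrium system
`ν_i + (κ/N) Σ_{k≠i} Φ(y_k − y_i) = 0`, `Σ_i y_i = 0`. -/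
theorem stmt19 (β κ : ℝ) (hβ : 1 < β) (hκ : 0 < κ)
    (N : ℕ) (hN : 1 ≤ N) (M : ℕ) (hM : 2 ≤ M) (ν : Fin M → ℝ)
    (y ybar : Fin M → ℝ) (hy : StrictMono y) (hybar : StrictMono ybar)
    (hysum : ∑ i, y i = 0) (hybarsum : ∑ i, ybar i = 0)
    (heq : ∀ i : Fin M,
      ν i + (κ / (N:ℝ)) * ∑ k ∈ Finset.univ.erase i, PhiCS β (y k - y i) = 0)
    (heqbar : ∀ i : Fin M,
      ν i + (κ / (N:ℝ)) * ∑ k ∈ Finset.univ.erase i, PhiCS β (ybar k - ybar i) = 0) :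
    y = ybar := by
  have hN0 : (0:ℝ) < N := by exact_mod_cast Nat.lt_of_lt_of_le Nat.zero_lt_one hN
  have hc : (κ / (N:ℝ)) ≠ 0 := ne_of_gt (div_pos hκ hN0)
  have key : ∀ i, ∑ k ∈ Finset.univ.erase i, PhiCS β (y k - y i)
      = ∑ k ∈ Finset.univ.erase i, PhiCS β (ybar k - ybar i) := by
    intro i
    have h1 := heq i
    have h2 := heqbar i
    have h3 : (κ / (N:ℝ)) * ∑ k ∈ Finset.univ.erase i, PhiCS β (y k - y i)
        = (κ / (N:ℝ)) * ∑ k ∈ Finset.univ.erase i, PhiCS β (ybar k - ybar i) := by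
      linarith
    exact mul_left_cancel₀ hc h3
  set d : Fin M → ℝ := fun i => y i - ybar i with hd
  have : Nonempty (Fin M) := ⟨⟨0, by omega⟩⟩
  obtain ⟨i, hi⟩ := Finite.exists_max d
  -- all terms satisfy ≤, strict when d k < d i
  have hle : ∀ k, k ≠ i → PhiCS β (y k - y i) ≤ PhiCS β (ybar k - ybar i) := by
    intro k hk
    rcases eq_or_lt_of_le (hi k) with hEq | hLt
    · have : y k - y i = ybar k - ybar i := by
        simp only [hd] at hEq; linarith
      rw [this]
    · have hdiff : y k - y i < ybar k - ybar i := by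
        simp only [hd] at hLt; linarith
      rcases lt_or_gt_of_ne hk with hki | hik
      · -- k < i : both differences negative
        exact le_of_lt (phiCS_lt hβ hdiff (Or.inr (by linarith [hybar hki])))
      · -- i < k : both differences positive
        exact le_of_lt (phiCS_lt hβ hdiff (Or.inl (by linarith [hy hik])))
  have hall : ∀ k, d k = d i := by
    intro k
    by_contra hne
    have hk_ne : k ≠ i := by rintro rfl; exact hne rfl
    have hkmem : k ∈ Finset.univ.erase i := Finset.mem_erase.mpr ⟨hk_ne, Finset.mem_univ k⟩
    have hdk : d k < d i := lt_of_le_of_ne (hi k) hne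
    have hstrict : PhiCS β (y k - y i) < PhiCS β (ybar k - ybar i) := by
      have hdiff : y k - y i < ybar k - ybar i := by
        simp only [hd] at hdk; linarith
      rcases lt_or_gt_of_ne hk_ne with hki | hik
      · exact phiCS_lt hβ hdiff (Or.inr (by linarith [hybar hki]))
      · exact phiCS_lt hβ hdiff (Or.inl (by linarith [hy hik]))
    have hsumlt : ∑ j ∈ Finset.univ.erase i, PhiCS β (y j - y i)
        < ∑ j ∈ Finset.univ.erase i, PhiCS β (ybar j - ybar i) :=
      Finset.sum_lt_sum (fun j hj => hle j (Finset.mem_erase.mp hj).1)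
        ⟨k, hkmem, hstrict⟩
    exact absurd (key i) (ne_of_lt hsumlt)
  have hsumd : ∑ k, d k = 0 := by
    simp only [hd]
    rw [Finset.sum_sub_distrib, hysum, hybarsum, sub_zero]
  have hMd : (M : ℝ) * d i = 0 := by
    rw [← hsumd]
    rw [Finset.sum_congr rfl (fun k _ => hall k)]
    simp [Finset.card_univ, mul_comm]
  have hMne : (M : ℝ) ≠ 0 := by
    have : M ≠ 0 := by omega
    exact_mod_cast this
  have hdi : d i = 0 := by
    rcases mul_eq_zero.mp hMd with h | h
    · exact absurd h hMne
    · exact h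
  funext k
  have := hall k
  rw [hdi] at this
  simp only [hd] at this
  linarith
end
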